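/- arXiv:2507.03379 — 7 statements merged into one kernel-verified Lean document; each statement's English description precedes it below -/
import Mathlib

section
/- Fix an integer n ≥ 1, radii 0 = r_n < r_{n-1} < ... < r_1 < r_0 = 1, a positive integer j, and positive reals σ_1, ..., σ_n. Define ρ_i = (σ_i − σ_{i+1})/(σ_i + σ_{i+1}) for 1 ≤ i ≤ n−1, and define C_{n,j} = 0 and, backwards for i = n−1, ..., 1, C_{i,j} = (ρ_i r_i^{2j} + C_{i+1,j})/(1 + ρ_i C_{i+1,j} r_i^{−2j}). Then for every 1 ≤ i ≤ n one has |C_{i,j}| ≤ r_i^{2j}; in particular |C_{1,j}| < 1 and all denominators in the recurrence are positive. -/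
/-!
Writing `t = r_i^{2j}` and `x = C_{i+1} / t`, the recurrence reads
`C_i = t · (ρ_i + x) / (1 + ρ_i x)`, a rescaled real Möbius automorphism of the unit disk
(`|ρ_i| < 1` because the conductivities are positive). Since the radii decrease strictly,
`|C_{i+1}| ≤ r_{i+1}^{2j} < r_i^{2j}` gives `|x| < 1`, hence `|C_i| < r_i^{2j}`, and the bound
propagates backwards from `C_n = 0`.
-/

theorem abs_sub_div_add_lt_one {a b : ℝ} (ha : 0 < a) (hb : 0 < b) :
    |(a - b) / (a + b)| < 1 := by
  rw [abs_div, abs_of_pos (add_pos ha hb), div_lt_one (add_pos ha hb), abs_sub_lt_iff]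
  constructor <;> linarith

theorem abs_div_lt_one_of_abs_lt {c t : ℝ} (hc : |c| < t) : |c / t| < 1 := by
  have ht : 0 < t := (abs_nonneg c).trans_lt hc
  rwa [abs_div, abs_of_pos ht, div_lt_one ht]

theorem one_add_mul_pos_of_abs_lt_one {ρ x : ℝ} (hρ : |ρ| < 1) (hx : |x| < 1) :
    0 < 1 + ρ * x := by
  have : |ρ * x| < 1 := by
    rw [abs_mul]
    exact mul_lt_one_of_nonneg_of_lt_one_left (abs_nonneg ρ) hρ hx.le
  linarith [neg_abs_le (ρ * x)]

theorem abs_mobius_lt_one {ρ x : ℝ} (hρ : |ρ| < 1) (hx : |x| < 1) :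
    |(ρ + x) / (1 + ρ * x)| < 1 := by
  have hD := one_add_mul_pos_of_abs_lt_one hρ hx
  rw [abs_div, abs_of_pos hD, div_lt_one hD, abs_lt]
  obtain ⟨hρl, hρu⟩ := abs_lt.mp hρ
  obtain ⟨hxl, hxu⟩ := abs_lt.mp hx
  -- `1 + ρ x ∓ (ρ + x) = (1 ∓ ρ)(1 ∓ x)`
  constructor
  · nlinarith [mul_pos (by linarith : 0 < 1 + ρ) (by linarith : 0 < 1 + x)]
  · nlinarith [mul_pos (by linarith : 0 < 1 - ρ) (by linarith : 0 < 1 - x)]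

theorem reflection_step_eq_mul_mobius {ρ c t : ℝ} (ht : 0 < t) :
    (ρ * t + c) / (1 + ρ * c * t⁻¹) = t * ((ρ + c / t) / (1 + ρ * (c / t))) := by
  field_simp

theorem one_add_mul_mul_inv_pos {ρ c t : ℝ} (hρ : |ρ| < 1) (hc : |c| < t) :
    0 < 1 + ρ * c * t⁻¹ := by
  rw [mul_assoc, ← div_eq_mul_inv]
  exact one_add_mul_pos_of_abs_lt_one hρ (abs_div_lt_one_of_abs_lt hc)

theorem abs_reflection_step_lt {ρ c t : ℝ} (hρ : |ρ| < 1) (hc : |c| < t) :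
    |(ρ * t + c) / (1 + ρ * c * t⁻¹)| < t := by
  have ht : 0 < t := (abs_nonneg c).trans_lt hc
  rw [reflection_step_eq_mul_mobius ht, abs_mul, abs_of_pos ht]
  exact mul_lt_of_lt_one_right ht (abs_mobius_lt_one hρ (abs_div_lt_one_of_abs_lt hc))

theorem abs_le_of_reflection_recurrence {m n : ℕ} {t ρ C : ℕ → ℝ}
    (hρ : ∀ i, m ≤ i → i < n → |ρ i| < 1) (ht : ∀ i, m ≤ i → i < n → t (i + 1) < t i)
    (hCn : |C n| ≤ t n)
    (hC : ∀ i, m ≤ i → i < n → C i = (ρ i * t i + C (i + 1)) / (1 + ρ i * C (i + 1) * (t i)⁻¹))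
    {i : ℕ} (hmi : m ≤ i) (hin : i ≤ n) : |C i| ≤ t i := by
  refine Nat.decreasingInduction' (P := fun k => |C k| ≤ t k) (fun k hkn hik ih => ?_) hin hCn
  have hmk := hmi.trans hik
  rw [hC k hmk hkn]
  exact (abs_reflection_step_lt (hρ k hmk hkn) (ih.trans_lt (ht k hmk hkn))).le

/-- Bound on the reflection-coefficient recurrence of the radial Calderón problem:
with radii `0 = r n < r (n-1) < ... < r 0 = 1`, positive conductivities `σ i` and
`ρ i = (σ i - σ (i+1))/(σ i + σ (i+1))`, the backward recurrence
`C n = 0`, `C i = (ρ i * (r i)^(2j) + C (i+1)) / (1 + ρ i * C (i+1) * ((r i)^(2j))⁻¹)`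
satisfies `|C i| ≤ (r i)^(2j)` for `1 ≤ i ≤ n`; in particular `|C 1| < 1` and all
denominators in the recurrence are positive. -/
theorem reflection_coeff_bound (n : ℕ) (hn : 1 ≤ n)
    (r : ℕ → ℝ) (hr0 : r 0 = 1) (hrn : r n = 0)
    (hrmono : ∀ i, i < n → r (i + 1) < r i)
    (j : ℕ) (hj : 1 ≤ j)
    (σ : ℕ → ℝ) (hσ : ∀ i, 1 ≤ i → i ≤ n → 0 < σ i)
    (ρ : ℕ → ℝ)
    (hρ : ∀ i, 1 ≤ i → i ≤ n - 1 → ρ i = (σ i - σ (i + 1)) / (σ i + σ (i + 1)))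
    (C : ℕ → ℝ) (hCn : C n = 0)
    (hC : ∀ i, 1 ≤ i → i ≤ n - 1 →
      C i = (ρ i * (r i) ^ (2 * j) + C (i + 1)) /
        (1 + ρ i * C (i + 1) * ((r i) ^ (2 * j))⁻¹)) :
    (∀ i, 1 ≤ i → i ≤ n → |C i| ≤ (r i) ^ (2 * j)) ∧
    |C 1| < 1 ∧
    (∀ i, 1 ≤ i → i ≤ n - 1 → 0 < 1 + ρ i * C (i + 1) * ((r i) ^ (2 * j))⁻¹) := by
  have hr_anti : StrictAntiOn r (Set.Iic n) := strictAntiOn_Iic_of_succ_lt hrmono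
  have hr_nonneg : ∀ i ≤ n, 0 ≤ r i := fun i hi =>
    hrn ▸ hr_anti.antitoneOn (Set.mem_Iic.mpr hi) (Set.mem_Iic.mpr le_rfl) hi
  have hρ_lt : ∀ i, 1 ≤ i → i < n → |ρ i| < 1 := fun i h1 h2 =>
    hρ i h1 (by omega) ▸ abs_sub_div_add_lt_one (hσ i h1 h2.le) (hσ (i + 1) (by omega) h2)
  have ht_lt : ∀ i, 1 ≤ i → i < n → r (i + 1) ^ (2 * j) < r i ^ (2 * j) := fun i _ h2 =>
    pow_lt_pow_left₀ (hrmono i h2) (hr_nonneg (i + 1) h2) (by omega)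
  have hCn_le : |C n| ≤ r n ^ (2 * j) := by
    rw [hCn, abs_zero]
    exact pow_nonneg (hr_nonneg n le_rfl) _
  have hbound : ∀ i, 1 ≤ i → i ≤ n → |C i| ≤ r i ^ (2 * j) := fun i h1 h2 =>
    abs_le_of_reflection_recurrence hρ_lt ht_lt hCn_le (fun k h1 h2 => hC k h1 (by omega)) h1 h2
  refine ⟨hbound, ?_, fun i h1 h2 => ?_⟩
  · have hr1 : r 1 < 1 := hr0 ▸ hrmono 0 (by omega)
    exact (hbound 1 le_rfl hn).trans_lt (pow_lt_one₀ (hr_nonneg 1 hn) hr1 (by omega))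
  · exact one_add_mul_mul_inv_pos (hρ_lt i h1 (by omega))
      ((hbound (i + 1) (by omega) (by omega)).trans_lt (ht_lt i h1 (by omega)))
end

section
/- Fix r ∈ (0,1) and a positive integer j. For σ = (σ_1, σ_2) ∈ (ℝ_{>0})^2 define ρ(σ) = (σ_1 − σ_2)/(σ_1 + σ_2) and λ_j(σ) = (1 + ρ(σ) r^{2j})/(j σ_1 (1 − ρ(σ) r^{2j})). Then λ_j is strictly decreasing in each variable: for every σ ∈ (ℝ_{>0})^2, the partial derivatives satisfy ∂λ_j/∂σ_1(σ) < 0 and ∂λ_j/∂σ_2(σ) < 0. -/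
/-!
Clearing the denominator of `ρ = (σ₁ - σ₂)/(σ₁ + σ₂)` turns `λ_j` into the rational function
`((1 + R) σ₁ + (1 - R) σ₂) / (j σ₁ ((1 - R) σ₁ + (1 + R) σ₂))` with `R = r^(2j) ∈ (0,1)`.
The quotient rule then gives the numerators `-j (1 - R) (σ₂ D + σ₁ N)` in `σ₁` and `-4 R j σ₁²` in `σ₂`,
where `N` and `D` are the (positive) numerator and second denominator factor.
-/

open Filter Topology

noncomputable def twoAnnulusEigenvalue (R c x y : ℝ) : ℝ :=
  ((1 + R) * x + (1 - R) * y) / (c * x * ((1 - R) * x + (1 + R) * y))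

theorem twoAnnulusEigenvalue_eq {R c x y : ℝ} (hxy : x + y ≠ 0) :
    (1 + (x - y) / (x + y) * R) / (c * x * (1 - (x - y) / (x + y) * R)) =
      twoAnnulusEigenvalue R c x y := by
  have hnum : (1 + R) * x + (1 - R) * y = (x + y) * (1 + (x - y) / (x + y) * R) := by
    field_simp; ring
  have hden : c * x * ((1 - R) * x + (1 + R) * y) =
      (x + y) * (c * x * (1 - (x - y) / (x + y) * R)) := by
    field_simp; ring
  rw [twoAnnulusEigenvalue, hnum, hden, mul_div_mul_left _ _ hxy]

section Derivatives

variable {R c x y : ℝ}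

theorem hasDerivAt_twoAnnulusEigenvalue_fst (hden : c * x * ((1 - R) * x + (1 + R) * y) ≠ 0) :
    HasDerivAt (fun t => twoAnnulusEigenvalue R c t y)
      (-(c * (1 - R) * (y * ((1 - R) * x + (1 + R) * y) + x * ((1 + R) * x + (1 - R) * y))) /
        (c * x * ((1 - R) * x + (1 + R) * y)) ^ 2) x := by
  have hN : HasDerivAt (fun t => (1 + R) * t + (1 - R) * y) (1 + R) x := by
    simpa using ((hasDerivAt_id x).const_mul (1 + R)).add_const ((1 - R) * y)
  have hD : HasDerivAt (fun t => (1 - R) * t + (1 + R) * y) (1 - R) x := by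
    simpa using ((hasDerivAt_id x).const_mul (1 - R)).add_const ((1 + R) * y)
  have hcx : HasDerivAt (fun t => c * t) c x := by
    simpa using (hasDerivAt_id x).const_mul c
  exact (hN.fun_div (hcx.fun_mul hD) hden).congr_deriv (by ring)

theorem hasDerivAt_twoAnnulusEigenvalue_snd (hden : c * x * ((1 - R) * x + (1 + R) * y) ≠ 0) :
    HasDerivAt (fun t => twoAnnulusEigenvalue R c x t)
      (-(4 * R * c * x ^ 2) / (c * x * ((1 - R) * x + (1 + R) * y)) ^ 2) y := by
  have hN : HasDerivAt (fun t => (1 + R) * x + (1 - R) * t) (1 - R) y := by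
    simpa using ((hasDerivAt_id y).const_mul (1 - R)).const_add ((1 + R) * x)
  have hD : HasDerivAt (fun t => c * x * ((1 - R) * x + (1 + R) * t)) (c * x * (1 + R)) y := by
    simpa using (((hasDerivAt_id y).const_mul (1 + R)).const_add ((1 - R) * x)).const_mul (c * x)
  exact (hN.fun_div hD hden).congr_deriv (by ring)

variable (hc : 0 < c) (hx : 0 < x) (hy : 0 < y)
include hc hx hy

theorem twoAnnulusEigenvalue_denom_pos (hR : R ∈ Set.Ioo (-1) 1) :
    0 < c * x * ((1 - R) * x + (1 + R) * y) := by
  have : 0 < 1 - R := by linarith [hR.2]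
  have : 0 < 1 + R := by linarith [hR.1]
  positivity

theorem deriv_twoAnnulusEigenvalue_fst_neg (hR : R ∈ Set.Ioo (-1) 1) :
    deriv (fun t => twoAnnulusEigenvalue R c t y) x < 0 := by
  have hden := twoAnnulusEigenvalue_denom_pos hc hx hy hR
  rw [(hasDerivAt_twoAnnulusEigenvalue_fst hden.ne').deriv]
  have : 0 < 1 - R := by linarith [hR.2]
  have : 0 < 1 + R := by linarith [hR.1]
  apply div_neg_of_neg_of_pos _ (by positivity)
  rw [neg_neg_iff_pos]
  positivity

theorem deriv_twoAnnulusEigenvalue_snd_neg (hR : R ∈ Set.Ioo 0 1) :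
    deriv (fun t => twoAnnulusEigenvalue R c x t) y < 0 := by
  have hden := twoAnnulusEigenvalue_denom_pos hc hx hy ⟨by linarith [hR.1], hR.2⟩
  rw [(hasDerivAt_twoAnnulusEigenvalue_snd hden.ne').deriv]
  have hR0 : 0 < R := hR.1
  apply div_neg_of_neg_of_pos _ (by positivity)
  rw [neg_neg_iff_pos]
  positivity

end Derivatives

/-- Strict monotonicity of the two-annulus Neumann-to-Dirichlet eigenvalue:
with `λ_j(σ₁,σ₂) = (1 + ρ r^(2j))/(j σ₁ (1 - ρ r^(2j)))`, `ρ = (σ₁-σ₂)/(σ₁+σ₂)`,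
both partial derivatives are negative on `(ℝ_{>0})²`. -/
theorem two_annulus_strict_decreasing (r : ℝ) (hr : r ∈ Set.Ioo (0 : ℝ) 1)
    (j : ℕ) (hj : 1 ≤ j)
    (lam : ℝ → ℝ → ℝ)
    (hlam : ∀ s1 s2 : ℝ, lam s1 s2 =
      (1 + ((s1 - s2) / (s1 + s2)) * r ^ (2 * j)) /
        ((j : ℝ) * s1 * (1 - ((s1 - s2) / (s1 + s2)) * r ^ (2 * j))))
    (s1 s2 : ℝ) (h1 : 0 < s1) (h2 : 0 < s2) :
    deriv (fun t => lam t s2) s1 < 0 ∧ deriv (fun t => lam s1 t) s2 < 0 := by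
  set R := r ^ (2 * j)
  have hR : R ∈ Set.Ioo 0 1 := ⟨pow_pos hr.1 _, pow_lt_one₀ hr.1.le hr.2 (by omega)⟩
  have hc : (0 : ℝ) < j := by exact_mod_cast hj
  have hlam' : ∀ x y, 0 < x → 0 < y → lam x y = twoAnnulusEigenvalue R j x y := fun x y hx hy =>
    (hlam x y).trans (twoAnnulusEigenvalue_eq (by positivity))
  constructor
  · have heq : (fun t => lam t s2) =ᶠ[𝓝 s1] fun t => twoAnnulusEigenvalue R j t s2 := by
      filter_upwards [eventually_gt_nhds h1] with t ht using hlam' t s2 ht h2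
    rw [heq.deriv_eq]
    exact deriv_twoAnnulusEigenvalue_fst_neg hc h1 h2 ⟨by linarith [hR.1], hR.2⟩
  · have heq : (fun t => lam s1 t) =ᶠ[𝓝 s2] fun t => twoAnnulusEigenvalue R j s1 t := by
      filter_upwards [eventually_gt_nhds h2] with t ht using hlam' s1 t h1 ht
    rw [heq.deriv_eq]
    exact deriv_twoAnnulusEigenvalue_snd_neg hc h1 h2 hR
end

section
/- Fix r ∈ (0,1). For σ ∈ (ℝ_{>0})^2 let Λ(σ) = (λ_1(σ), λ_2(σ)) where λ_j(σ) = (1 + ρ(σ) r^{2j})/(j σ_1 (1 − ρ(σ) r^{2j})) and ρ(σ) = (σ_1 − σ_2)/(σ_1 + σ_2). Then the Jacobian determinant of Λ satisfies det Λ'(σ) < 0 for every σ ∈ (ℝ_{>0})^2; in particular Λ'(σ) is invertible everywhere. -/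
/-!
Writing `q = r^{2j}` and `B = (1-q)σ₁ + (1+q)σ₂`, one has `λⱼ = ((1+q)σ₁ + (1-q)σ₂) / (j σ₁ B)`,
so `∂₂λⱼ = -4q / (j B²) < 0` and `∂₁λⱼ = hⱼ ∂₂λⱼ` with
`hⱼ = (q⁻¹(σ₁+σ₂)² - q(σ₁-σ₂)² - 4σ₁σ₂) / (4σ₁²)`. Hence `det Λ' = ∂₂λ₁ ∂₂λ₂ (h₁ - h₂)`, where
the first factor is positive and `h₁ < h₂` because `h` is strictly decreasing in `q` and
`r⁴ < r²`.
-/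

open Set

/-- The paper's `λⱼ(σ₁, σ₂)` with `r^{2j}` replaced by `q` and the factor `j` by `c`. -/
noncomputable def annulusEigenvalue (q c a b : ℝ) : ℝ :=
  (1 + (a - b) / (a + b) * q) / (c * a * (1 - (a - b) / (a + b) * q))

/-- The paper's `h(j)`, with `r^{2j}` replaced by `q`. -/
noncomputable def annulusDerivRatio (q a b : ℝ) : ℝ :=
  ((a + b) ^ 2 / q - q * (a - b) ^ 2 - 4 * a * b) / (4 * a ^ 2)

section

variable {q c a b : ℝ}

theorem annulusEigenvalue_eq_div (hab : a + b ≠ 0) :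
    annulusEigenvalue q c a b =
      ((1 + q) * a + (1 - q) * b) / (c * a * ((1 - q) * a + (1 + q) * b)) := by
  have hnum : 1 + (a - b) / (a + b) * q = ((1 + q) * a + (1 - q) * b) / (a + b) := by
    field_simp; ring
  have hden : 1 - (a - b) / (a + b) * q = ((1 - q) * a + (1 + q) * b) / (a + b) := by
    field_simp; ring
  rw [annulusEigenvalue, hnum, hden, ← mul_div_assoc, div_div_div_cancel_right₀ hab]

theorem hasDerivAt_annulusEigenvalue_fst (hc : c ≠ 0) (ha : a ≠ 0) (hab : a + b ≠ 0)
    (hB : (1 - q) * a + (1 + q) * b ≠ 0) :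
    HasDerivAt (fun t => annulusEigenvalue q c t b)
      (-(1 - q) * ((1 + q) * (a ^ 2 + b ^ 2) + 2 * (1 - q) * a * b) /
        (c * a ^ 2 * ((1 - q) * a + (1 + q) * b) ^ 2)) a := by
  have hnum : HasDerivAt (fun t => (1 + q) * t + (1 - q) * b) (1 + q) a := by
    simpa using ((hasDerivAt_id a).const_mul (1 + q)).add_const ((1 - q) * b)
  have hden : HasDerivAt (fun t => c * t * ((1 - q) * t + (1 + q) * b))
      (c * ((1 - q) * a + (1 + q) * b) + c * a * (1 - q)) a := by
    have hB' : HasDerivAt (fun t => (1 - q) * t + (1 + q) * b) (1 - q) a := by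
      simpa using ((hasDerivAt_id a).const_mul (1 - q)).add_const ((1 + q) * b)
    have hct : HasDerivAt (fun t => c * t) c a := by simpa using (hasDerivAt_id a).const_mul c
    exact hct.mul hB'
  have hquot := hnum.div hden (by simp [hc, ha, hB])
  refine (hquot.congr_deriv ?_).congr_of_eventuallyEq ?_
  · field_simp
    ring
  · filter_upwards [(continuous_id.add continuous_const).continuousAt.eventually_ne hab]
      with t ht
    exact annulusEigenvalue_eq_div ht

theorem hasDerivAt_annulusEigenvalue_snd (hc : c ≠ 0) (ha : a ≠ 0) (hab : a + b ≠ 0)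
    (hB : (1 - q) * a + (1 + q) * b ≠ 0) :
    HasDerivAt (fun t => annulusEigenvalue q c a t)
      (-4 * q / (c * ((1 - q) * a + (1 + q) * b) ^ 2)) b := by
  have hnum : HasDerivAt (fun t => (1 + q) * a + (1 - q) * t) (1 - q) b := by
    simpa using ((hasDerivAt_id b).const_mul (1 - q)).const_add ((1 + q) * a)
  have hden : HasDerivAt (fun t => c * a * ((1 - q) * a + (1 + q) * t))
      (c * a * (1 + q)) b := by
    simpa using (((hasDerivAt_id b).const_mul (1 + q)).const_add ((1 - q) * a)).const_mul (c * a)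
  have hquot := hnum.div hden (by simp [hc, ha, hB])
  refine (hquot.congr_deriv ?_).congr_of_eventuallyEq ?_
  · field_simp
    ring
  · filter_upwards [(continuous_const.add continuous_id).continuousAt.eventually_ne hab]
      with t ht
    exact annulusEigenvalue_eq_div ht

theorem annulusDerivRatio_mul (hq : q ≠ 0) (hc : c ≠ 0) (ha : a ≠ 0) :
    annulusDerivRatio q a b * (-4 * q / (c * ((1 - q) * a + (1 + q) * b) ^ 2)) =
      -(1 - q) * ((1 + q) * (a ^ 2 + b ^ 2) + 2 * (1 - q) * a * b) /
        (c * a ^ 2 * ((1 - q) * a + (1 + q) * b) ^ 2) := by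
  rw [annulusDerivRatio]
  field_simp
  ring

theorem deriv_annulusEigenvalue (hq₀ : 0 < q) (hq₁ : q < 1) (hc : 0 < c) (ha : 0 < a)
    (hb : 0 < b) :
    deriv (fun t => annulusEigenvalue q c t b) a =
        annulusDerivRatio q a b * deriv (fun t => annulusEigenvalue q c a t) b ∧
      deriv (fun t => annulusEigenvalue q c a t) b < 0 := by
  have hB : 0 < (1 - q) * a + (1 + q) * b := by nlinarith
  have hab : a + b ≠ 0 := by positivity
  rw [(hasDerivAt_annulusEigenvalue_fst hc.ne' ha.ne' hab hB.ne').deriv,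
    (hasDerivAt_annulusEigenvalue_snd hc.ne' ha.ne' hab hB.ne').deriv,
    annulusDerivRatio_mul hq₀.ne' hc.ne' ha.ne']
  refine ⟨rfl, div_neg_of_neg_of_pos (by linarith) (by positivity)⟩

theorem annulusDerivRatio_strictAntiOn (ha : a ≠ 0) :
    StrictAntiOn (fun q => annulusDerivRatio q a b) (Ioi 0) := by
  intro q hq q' hq' hlt
  simp only [annulusDerivRatio]
  gcongr ?_ / _
  have hsum : (a + b) ^ 2 / q' ≤ (a + b) ^ 2 / q := by gcongr
  have hdiff : q * (a - b) ^ 2 ≤ q' * (a - b) ^ 2 := by gcongr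
  rcases eq_or_ne (a - b) 0 with hab | hab
  · have : (a + b) ^ 2 / q' < (a + b) ^ 2 / q := by
      have : a + b ≠ 0 := by contrapose! ha; linarith
      gcongr
    linarith
  · have : q * (a - b) ^ 2 < q' * (a - b) ^ 2 := by gcongr
    linarith

end

/-- Negativity of the Jacobian determinant of the two-annulus forward map
`Λ(σ) = (λ₁(σ), λ₂(σ))`: for every `σ ∈ (ℝ_{>0})²`,
`det Λ'(σ) = ∂₁λ₁ ∂₂λ₂ − ∂₁λ₂ ∂₂λ₁ < 0`. -/
theorem two_annulus_jacobian_det_neg (r : ℝ) (hr : r ∈ Set.Ioo (0 : ℝ) 1)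
    (lam : ℕ → ℝ → ℝ → ℝ)
    (hlam : ∀ (j : ℕ) (s1 s2 : ℝ), lam j s1 s2 =
      (1 + ((s1 - s2) / (s1 + s2)) * r ^ (2 * j)) /
        ((j : ℝ) * s1 * (1 - ((s1 - s2) / (s1 + s2)) * r ^ (2 * j))))
    (s1 s2 : ℝ) (h1 : 0 < s1) (h2 : 0 < s2) :
    deriv (fun t => lam 1 t s2) s1 * deriv (fun t => lam 2 s1 t) s2 -
      deriv (fun t => lam 2 t s2) s1 * deriv (fun t => lam 1 s1 t) s2 < 0 := by
  obtain ⟨hr₀, hr₁⟩ := hr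
  obtain rfl : lam = fun j : ℕ => annulusEigenvalue (r ^ (2 * j)) j := by
    ext j t u
    exact hlam j t u
  have hq : ∀ j, 0 < j → 0 < r ^ (2 * j) ∧ r ^ (2 * j) < 1 := fun j hj =>
    ⟨by positivity, pow_lt_one₀ hr₀.le hr₁ (by omega)⟩
  obtain ⟨hd₁, hneg₁⟩ := deriv_annulusEigenvalue (hq 1 one_pos).1 (hq 1 one_pos).2
    (c := ((1 : ℕ) : ℝ)) (by norm_num) h1 h2
  obtain ⟨hd₂, hneg₂⟩ := deriv_annulusEigenvalue (hq 2 two_pos).1 (hq 2 two_pos).2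
    (c := ((2 : ℕ) : ℝ)) (by norm_num) h1 h2
  have hratio : annulusDerivRatio (r ^ (2 * 1)) s1 s2 < annulusDerivRatio (r ^ (2 * 2)) s1 s2 :=
    annulusDerivRatio_strictAntiOn h1.ne' (hq 2 two_pos).1 (hq 1 one_pos).1
      (pow_lt_pow_right_of_lt_one₀ hr₀ hr₁ (by norm_num))
  have hfactor : ∀ h₁ h₂ y₁ y₂ : ℝ, h₁ * y₁ * y₂ - h₂ * y₂ * y₁ = y₁ * y₂ * (h₁ - h₂) := by
    intros
    ring
  rw [hd₁, hd₂, hfactor]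
  exact mul_neg_of_pos_of_neg (mul_pos_of_neg_of_neg hneg₁ hneg₂) (sub_neg.2 hratio)
end

section
/- Fix r ∈ (0,1) and an integer m ≥ 2. The map Λ : (ℝ_{>0})^2 → ℝ^m, Λ(σ) = (λ_1(σ), ..., λ_m(σ)) with λ_j(σ) = (1 + ρ(σ) r^{2j})/(j σ_1 (1 − ρ(σ) r^{2j})) and ρ(σ) = (σ_1 − σ_2)/(σ_1 + σ_2), is injective. -/
/-!
Write `ρ = (σ₁ - σ₂)/(σ₁ + σ₂) ∈ (-1, 1)` and `u = r²`, so that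
`λⱼ = g(ρ, uʲ) / (j σ₁)` with `g(ρ, t) = (1 + ρ t)/(1 - ρ t)`. The quotient
`λ₁/λ₂ = 2 g(ρ, u)/g(ρ, u²)` does not involve `σ₁` and is strictly increasing in `ρ`, so
it determines `ρ`; then `λ₁` determines `σ₁`, and `ρ` together with `σ₁` determines `σ₂`.
-/

open Set

noncomputable section

namespace TwoAnnulus

def contrast (s₁ s₂ : ℝ) : ℝ := (s₁ - s₂) / (s₁ + s₂)

def reflectionFactor (ρ t : ℝ) : ℝ := (1 + ρ * t) / (1 - ρ * t)

def eigenvalue (r : ℝ) (j : ℕ) (s₁ s₂ : ℝ) : ℝ :=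
  reflectionFactor (contrast s₁ s₂) (r ^ (2 * j)) / (j * s₁)

theorem contrast_mem_Ioo {s₁ s₂ : ℝ} (h₁ : 0 < s₁) (h₂ : 0 < s₂) :
    contrast s₁ s₂ ∈ Ioo (-1) 1 := by
  have hs : 0 < s₁ + s₂ := by linarith
  constructor
  · rw [contrast, lt_div_iff₀ hs]; linarith
  · rw [contrast, div_lt_one hs]; linarith

theorem contrast_right_injOn {s₁ : ℝ} (h₁ : 0 < s₁) : InjOn (contrast s₁) (Ioi 0) := by
  intro s₂ (h₂ : 0 < s₂) s₂' (h₂' : 0 < s₂') h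
  rw [contrast, contrast, div_eq_div_iff (by positivity) (by positivity)] at h
  have : 2 * s₁ * (s₂' - s₂) = 0 := by linear_combination h
  have := (mul_eq_zero.mp this).resolve_left (by positivity)
  linarith

theorem abs_mul_lt_one {x y : ℝ} (hx : |x| < 1) (hy : |y| ≤ 1) : |x * y| < 1 := by
  rw [abs_mul]
  exact mul_lt_one_of_nonneg_of_lt_one_left (abs_nonneg x) hx hy

theorem one_sub_pos_and_one_add_pos {x : ℝ} (hx : |x| < 1) : 0 < 1 - x ∧ 0 < 1 + x := by
  obtain ⟨h₁, h₂⟩ := abs_lt.mp hx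
  constructor <;> linarith

theorem reflectionFactor_pos {ρ t : ℝ} (hρ : |ρ| < 1) (ht : |t| ≤ 1) :
    0 < reflectionFactor ρ t := by
  obtain ⟨h₁, h₂⟩ := one_sub_pos_and_one_add_pos (abs_mul_lt_one hρ ht)
  exact div_pos h₂ h₁

theorem reflectionFactor_div_sq_sub {ρ ρ' u : ℝ} (hρ : (1 - ρ * u) * (1 + ρ * u ^ 2) ≠ 0)
    (hρ' : (1 - ρ' * u) * (1 + ρ' * u ^ 2) ≠ 0) :
    reflectionFactor ρ' u / reflectionFactor ρ' (u ^ 2) -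
      reflectionFactor ρ u / reflectionFactor ρ (u ^ 2) =
      (ρ' - ρ) * (2 * u * (1 - u) * (1 + ρ * ρ' * u ^ 3)) /
        ((1 - ρ' * u) * (1 + ρ' * u ^ 2) * ((1 - ρ * u) * (1 + ρ * u ^ 2))) := by
  simp only [reflectionFactor, div_div_div_eq]
  rw [div_sub_div _ _ hρ' hρ]
  ring

theorem strictMonoOn_reflectionFactor_div_sq {u : ℝ} (hu : u ∈ Ioo 0 1) :
    StrictMonoOn (fun ρ => reflectionFactor ρ u / reflectionFactor ρ (u ^ 2)) (Ioo (-1) 1) := by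
  obtain ⟨hu₀, hu₁⟩ := hu
  have hu : |u| ≤ 1 := (abs_of_pos hu₀).trans_le hu₁.le
  have hu_pow (n : ℕ) : |u ^ n| ≤ 1 := (abs_pow u n).trans_le (pow_le_one₀ (abs_nonneg u) hu)
  intro ρ hρ ρ' hρ' hlt
  replace hρ : |ρ| < 1 := abs_lt.mpr hρ
  replace hρ' : |ρ'| < 1 := abs_lt.mpr hρ'
  obtain ⟨d₁, -⟩ := one_sub_pos_and_one_add_pos (abs_mul_lt_one hρ hu)
  obtain ⟨d₂, -⟩ := one_sub_pos_and_one_add_pos (abs_mul_lt_one hρ' hu)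
  obtain ⟨-, d₃⟩ := one_sub_pos_and_one_add_pos (abs_mul_lt_one hρ (hu_pow 2))
  obtain ⟨-, d₄⟩ := one_sub_pos_and_one_add_pos (abs_mul_lt_one hρ' (hu_pow 2))
  obtain ⟨-, hκ⟩ :=
    one_sub_pos_and_one_add_pos (abs_mul_lt_one (abs_mul_lt_one hρ hρ'.le) (hu_pow 3))
  have hu' : 0 < 2 * u * (1 - u) := mul_pos (mul_pos two_pos hu₀) (sub_pos.mpr hu₁)
  rw [← sub_pos, reflectionFactor_div_sq_sub (mul_pos d₁ d₃).ne' (mul_pos d₂ d₄).ne']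
  exact div_pos (mul_pos (sub_pos.mpr hlt) (mul_pos hu' hκ))
    (mul_pos (mul_pos d₂ d₄) (mul_pos d₁ d₃))

theorem eigenvalue_one_div_eigenvalue_two (r : ℝ) {s₁ : ℝ} (h₁ : s₁ ≠ 0) (s₂ : ℝ) :
    eigenvalue r 1 s₁ s₂ / eigenvalue r 2 s₁ s₂ =
      2 * (reflectionFactor (contrast s₁ s₂) (r ^ 2) /
        reflectionFactor (contrast s₁ s₂) ((r ^ 2) ^ 2)) := by
  simp only [eigenvalue, pow_mul, pow_one, Nat.cast_one, Nat.cast_ofNat]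
  field_simp

theorem eq_of_eigenvalue_one_eq_of_eigenvalue_two_eq {r : ℝ} (hr : r ∈ Ioo 0 1) {a b c d : ℝ}
    (ha : 0 < a) (hb : 0 < b) (hc : 0 < c) (hd : 0 < d)
    (h₁ : eigenvalue r 1 a b = eigenvalue r 1 c d)
    (h₂ : eigenvalue r 2 a b = eigenvalue r 2 c d) :
    a = c ∧ b = d := by
  have hu : r ^ 2 ∈ Ioo 0 1 := ⟨pow_pos hr.1 2, pow_lt_one₀ hr.1.le hr.2 two_ne_zero⟩
  have hρ : contrast a b = contrast c d := by
    refine (strictMonoOn_reflectionFactor_div_sq hu).injOn (contrast_mem_Ioo ha hb)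
      (contrast_mem_Ioo hc hd) ?_
    have := congrArg₂ (· / ·) h₁ h₂
    rwa [eigenvalue_one_div_eigenvalue_two r ha.ne', eigenvalue_one_div_eigenvalue_two r hc.ne',
      mul_right_inj' two_ne_zero] at this
  have hg : reflectionFactor (contrast c d) (r ^ 2) ≠ 0 :=
    (reflectionFactor_pos (abs_lt.mpr (contrast_mem_Ioo hc hd))
      (abs_le.mpr ⟨by linarith [hu.1], hu.2.le⟩)).ne'
  obtain rfl : a = c := by
    simpa [eigenvalue, hρ, div_eq_mul_inv, hg] using h₁
  exact ⟨rfl, contrast_right_injOn ha hb hd hρ⟩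

end TwoAnnulus

end

open TwoAnnulus in
/-- Identifiability for the two-annulus radial Calderón problem: for `m ≥ 2`, the map
`σ ↦ (λ₁(σ), ..., λ_m(σ))` is injective on `(ℝ_{>0})²`. -/
theorem two_annulus_injective (r : ℝ) (hr : r ∈ Set.Ioo (0 : ℝ) 1)
    (m : ℕ) (hm : 2 ≤ m)
    (lam : ℕ → ℝ → ℝ → ℝ)
    (hlam : ∀ (j : ℕ) (s1 s2 : ℝ), lam j s1 s2 =
      (1 + ((s1 - s2) / (s1 + s2)) * r ^ (2 * j)) /
        ((j : ℝ) * s1 * (1 - ((s1 - s2) / (s1 + s2)) * r ^ (2 * j)))) :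
    Set.InjOn (fun σ : ℝ × ℝ => fun j : Fin m => lam (j.1 + 1) σ.1 σ.2)
      {σ : ℝ × ℝ | 0 < σ.1 ∧ 0 < σ.2} := by
  obtain rfl : lam = eigenvalue r := by
    funext j s₁ s₂
    exact (hlam j s₁ s₂).trans (div_mul_eq_div_div_swap _ _ _)
  rintro ⟨a, b⟩ ⟨ha, hb⟩ ⟨c, d⟩ ⟨hc, hd⟩ h
  obtain ⟨hac, hbd⟩ := eq_of_eigenvalue_one_eq_of_eigenvalue_two_eq hr ha hb hc hd
    (congrFun h ⟨0, by omega⟩) (congrFun h ⟨1, by omega⟩)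
  exact Prod.ext hac hbd
end

section
/- Fix r ∈ (0,1) and let Λ(σ) = (λ_1(σ), λ_2(σ)) as in the two-annulus model, λ_j(σ) = (1 + ρ(σ) r^{2j})/(j σ_1 (1 − ρ(σ) r^{2j})), ρ(σ) = (σ_1 − σ_2)/(σ_1 + σ_2). For every σ† ∈ (ℝ_{>0})^2, the least squares objective f(σ) = (1/2) ‖Λ(σ) − Λ(σ†)‖_2^2 has exactly one critical point on (ℝ_{>0})^2, namely σ = σ†. -/
/-!
Write `ρ` for the contrast `(σ₁ - σ₂) / (σ₁ + σ₂)` and `q_j = r ^ (2 j)`, so that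
`j λ_j = (1 + ρ q_j) / (σ₁ (1 - ρ q_j))`. The gradient of `f` at `σ` is
`Λ'(σ)ᵀ (Λ(σ) - Λ(σ†))`, and the Jacobian determinant of `(j λ_j)_{j = 1, 2}` is
`4 (q₂ - q₁) (1 + q₁ q₂ ρ²) / (σ₁² (σ₁ + σ₂)² (1 - ρ q₁)² (1 - ρ q₂)²)`, which never vanishes
because `|ρ q_j| < 1`. Hence a critical point satisfies `Λ(σ) = Λ(σ†)`. The quotient
`λ₁ / λ₂` depends on `ρ` alone and is injective in it, after which `λ₁` determines `σ₁` and `ρ`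
determines `σ₂`. Conversely `σ†` is a global minimum of `f ≥ 0`.
-/

open Filter ContinuousLinearMap

theorem HasFDerivAt.div_const {E : Type*} [NormedAddCommGroup E] [NormedSpace ℝ E] {g : E → ℝ}
    {L : E →L[ℝ] ℝ} {x : E} (h : HasFDerivAt g L x) (c : ℝ) :
    HasFDerivAt (fun y => g y / c) (c⁻¹ • L) x := by
  simpa only [div_eq_mul_inv] using h.mul_const c⁻¹

theorem eq_of_fderiv_half_sum_sq_eq_zero {E : Type*} [NormedAddCommGroup E] [NormedSpace ℝ E]
    {g₁ g₂ : E → ℝ} {L₁ L₂ : E →L[ℝ] ℝ} {x : E} {c₁ c₂ : ℝ}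
    (h₁ : HasFDerivAt g₁ L₁ x) (h₂ : HasFDerivAt g₂ L₂ x) (hL : LinearIndependent ℝ ![L₁, L₂])
    (hcrit : fderiv ℝ (fun y => 1 / 2 * ((g₁ y - c₁) ^ 2 + (g₂ y - c₂) ^ 2)) x = 0) :
    g₁ x = c₁ ∧ g₂ x = c₂ := by
  have hgrad : HasFDerivAt (fun y => 1 / 2 * ((g₁ y - c₁) ^ 2 + (g₂ y - c₂) ^ 2))
      ((g₁ x - c₁) • L₁ + (g₂ x - c₂) • L₂) x := by
    refine ((((h₁.sub_const c₁).pow 2).add ((h₂.sub_const c₂).pow 2)).const_mul _).congr_fderiv ?_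
    ext v
    simp only [smul_apply, add_apply, smul_eq_mul]
    ring
  obtain ⟨e₁, e₂⟩ := LinearIndependent.pair_iff.1 hL _ _ (hgrad.fderiv ▸ hcrit)
  exact ⟨sub_eq_zero.1 e₁, sub_eq_zero.1 e₂⟩

theorem linearIndependent_pair_of_det_ne_zero {L₁ L₂ : ℝ × ℝ →L[ℝ] ℝ}
    (h : L₁ (1, 0) * L₂ (0, 1) - L₁ (0, 1) * L₂ (1, 0) ≠ 0) :
    LinearIndependent ℝ ![L₁, L₂] := by
  refine LinearIndependent.pair_iff.2 fun s t hst => ?_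
  have e₁ : s * L₁ (1, 0) + t * L₂ (1, 0) = 0 := by simpa using congr($hst (1, 0))
  have e₂ : s * L₁ (0, 1) + t * L₂ (0, 1) = 0 := by simpa using congr($hst (0, 1))
  constructor
  · exact (mul_eq_zero.1 (by linear_combination L₂ (0, 1) * e₁ - L₂ (1, 0) * e₂ :
      s * (L₁ (1, 0) * L₂ (0, 1) - L₁ (0, 1) * L₂ (1, 0)) = 0)).resolve_right h
  · exact (mul_eq_zero.1 (by linear_combination L₁ (1, 0) * e₂ - L₁ (0, 1) * e₁ :
      t * (L₁ (1, 0) * L₂ (0, 1) - L₁ (0, 1) * L₂ (1, 0)) = 0)).resolve_right h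

noncomputable def contrast (σ : ℝ × ℝ) : ℝ := (σ.1 - σ.2) / (σ.1 + σ.2)

/-- `j λ_j(σ)` of the two-annulus model with `q = r ^ (2 j)`; `contrast` is the paper's `ρ`. -/
noncomputable def twoAnnulusEig (q : ℝ) (σ : ℝ × ℝ) : ℝ :=
  (1 + contrast σ * q) / (σ.1 * (1 - contrast σ * q))

noncomputable def twoAnnulusEigDeriv (q : ℝ) (σ : ℝ × ℝ) : ℝ × ℝ →L[ℝ] ℝ :=
  (-(1 - q) * (1 + q * contrast σ ^ 2) / (σ.1 ^ 2 * (1 - contrast σ * q) ^ 2)) • fst ℝ ℝ ℝ +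
    (-4 * q / ((σ.1 + σ.2) ^ 2 * (1 - contrast σ * q) ^ 2)) • snd ℝ ℝ ℝ

section

variable {q q₁ q₂ : ℝ} {σ τ : ℝ × ℝ}

theorem abs_contrast_mul_lt_one (hσ : 0 < σ.1 ∧ 0 < σ.2) (hq : |q| ≤ 1) :
    |contrast σ * q| < 1 := by
  have hρ : |contrast σ| < 1 := by
    rw [contrast, abs_div, abs_of_pos (add_pos hσ.1 hσ.2), div_lt_one (add_pos hσ.1 hσ.2)]
    exact abs_sub_lt_iff.2 ⟨by linarith, by linarith⟩
  rw [abs_mul]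
  exact mul_lt_one_of_nonneg_of_lt_one_left (abs_nonneg _) hρ hq

theorem hasFDerivAt_twoAnnulusEig (h₁ : σ.1 ≠ 0) (hs : σ.1 + σ.2 ≠ 0)
    (hρ : 1 - contrast σ * q ≠ 0) :
    HasFDerivAt (twoAnnulusEig q) (twoAnnulusEigDeriv q σ) σ := by
  have hinv {c : ℝ × ℝ → ℝ} {c' : ℝ × ℝ →L[ℝ] ℝ} (hc : HasFDerivAt c c' σ) (hx : c σ ≠ 0) :
      HasFDerivAt (fun y => (c y)⁻¹) (-(c σ ^ 2)⁻¹ • c') σ :=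
    (hasDerivAt_inv hx).comp_hasFDerivAt σ hc
  have hcontrast : HasFDerivAt contrast _ σ :=
    (hasFDerivAt_fst.sub hasFDerivAt_snd).mul (hinv (hasFDerivAt_fst.add hasFDerivAt_snd) hs)
  refine (((hasFDerivAt_const 1 σ).add (hcontrast.mul_const q)).mul
    (hinv (hasFDerivAt_fst.mul ((hasFDerivAt_const 1 σ).sub (hcontrast.mul_const q)))
      (mul_ne_zero h₁ hρ))).congr_fderiv ?_
  ext <;> simp [twoAnnulusEigDeriv, contrast] <;> field_simp <;> ring

theorem twoAnnulusEigDeriv_det (h₁ : σ.1 ≠ 0) (hs : σ.1 + σ.2 ≠ 0) :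
    twoAnnulusEigDeriv q₁ σ (1, 0) * twoAnnulusEigDeriv q₂ σ (0, 1) -
        twoAnnulusEigDeriv q₁ σ (0, 1) * twoAnnulusEigDeriv q₂ σ (1, 0) =
      4 * (q₂ - q₁) * (1 + q₁ * q₂ * contrast σ ^ 2) /
        (σ.1 ^ 2 * (σ.1 + σ.2) ^ 2 * (1 - contrast σ * q₁) ^ 2 * (1 - contrast σ * q₂) ^ 2) := by
  simp only [twoAnnulusEigDeriv, add_apply, smul_apply, coe_fst', coe_snd', smul_eq_mul]
  field_simp
  ring

theorem linearIndependent_twoAnnulusEigDeriv (hσ : 0 < σ.1 ∧ 0 < σ.2)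
    (hq₁ : |q₁| ≤ 1) (hq₂ : |q₂| ≤ 1) (hq : q₁ ≠ q₂) :
    LinearIndependent ℝ ![twoAnnulusEigDeriv q₁ σ, twoAnnulusEigDeriv q₂ σ] := by
  have h₁ := abs_lt.1 (abs_contrast_mul_lt_one hσ hq₁)
  have h₂ := abs_lt.1 (abs_contrast_mul_lt_one hσ hq₂)
  refine linearIndependent_pair_of_det_ne_zero ?_
  rw [twoAnnulusEigDeriv_det hσ.1.ne' (add_pos hσ.1 hσ.2).ne']
  have : 0 < 1 + q₁ * q₂ * contrast σ ^ 2 := by nlinarith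
  have : 1 - contrast σ * q₁ ≠ 0 := by linarith
  have : 1 - contrast σ * q₂ ≠ 0 := by linarith
  have : σ.1 + σ.2 ≠ 0 := by linarith
  have : q₂ - q₁ ≠ 0 := sub_ne_zero.2 (Ne.symm hq)
  have : σ.1 ≠ 0 := hσ.1.ne'
  positivity

/-- `h` is the equality of `λ_{q₁} / λ_{q₂}` at contrasts `u` and `v`, cleared of denominators;
the difference of its sides is `2 (q₁ - q₂) (u - v) (1 + q₁ q₂ u v)`. -/
theorem eq_of_cross_ratio_eq {u v : ℝ} (hq : q₁ ≠ q₂) (huv : 1 + q₁ * q₂ * u * v ≠ 0)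
    (h : (1 + u * q₁) * (1 - u * q₂) * ((1 - v * q₁) * (1 + v * q₂)) =
      (1 + v * q₁) * (1 - v * q₂) * ((1 - u * q₁) * (1 + u * q₂))) : u = v := by
  have : (u - v) * (2 * (q₁ - q₂) * (1 + q₁ * q₂ * u * v)) = 0 := by linear_combination h
  exact sub_eq_zero.1 ((mul_eq_zero.1 this).resolve_right
    (mul_ne_zero (mul_ne_zero two_ne_zero (sub_ne_zero.2 hq)) huv))

theorem contrast_eq_of_twoAnnulusEig_eq (hσ : 0 < σ.1 ∧ 0 < σ.2) (hτ : 0 < τ.1 ∧ 0 < τ.2)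
    (hq₁ : |q₁| ≤ 1) (hq₂ : |q₂| ≤ 1) (hq : q₁ ≠ q₂)
    (e₁ : twoAnnulusEig q₁ σ = twoAnnulusEig q₁ τ)
    (e₂ : twoAnnulusEig q₂ σ = twoAnnulusEig q₂ τ) :
    contrast σ = contrast τ := by
  have hσ₁ := abs_lt.1 (abs_contrast_mul_lt_one hσ hq₁)
  have hσ₂ := abs_lt.1 (abs_contrast_mul_lt_one hσ hq₂)
  have hτ₁ := abs_lt.1 (abs_contrast_mul_lt_one hτ hq₁)
  have hτ₂ := abs_lt.1 (abs_contrast_mul_lt_one hτ hq₂)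
  unfold twoAnnulusEig at e₁ e₂
  rw [div_eq_div_iff (by nlinarith) (by nlinarith)] at e₁ e₂
  refine eq_of_cross_ratio_eq hq (by nlinarith) (mul_left_cancel₀ (mul_pos hσ.1 hτ.1).ne' ?_)
  linear_combination (1 + contrast τ * q₂) * σ.1 * (1 - contrast σ * q₂) * e₁ -
    (1 + contrast τ * q₁) * σ.1 * (1 - contrast σ * q₁) * e₂

theorem injOn_twoAnnulusEig_pair (hq₁ : |q₁| ≤ 1) (hq₂ : |q₂| ≤ 1) (hq : q₁ ≠ q₂) :
    Set.InjOn (fun σ => (twoAnnulusEig q₁ σ, twoAnnulusEig q₂ σ)) {σ | 0 < σ.1 ∧ 0 < σ.2} := by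
  intro σ hσ τ hτ e
  simp only [Prod.mk.injEq] at e
  obtain ⟨e₁, e₂⟩ := e
  have hρ := contrast_eq_of_twoAnnulusEig_eq hσ hτ hq₁ hq₂ hq e₁ e₂
  have hτq := abs_lt.1 (abs_contrast_mul_lt_one hτ hq₁)
  have h₁ : σ.1 = τ.1 := by
    unfold twoAnnulusEig at e₁
    rw [hρ, div_eq_div_iff (by nlinarith [hσ.1]) (by nlinarith [hτ.1])] at e₁
    exact (mul_right_cancel₀ (by linarith) (mul_left_cancel₀ (by linarith) e₁)).symm
  have h₂ : σ.2 = τ.2 := by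
    unfold contrast at hρ
    rw [h₁, div_eq_div_iff (by linarith [hσ.2, hτ.1]) (by linarith [hτ.2, hτ.1])] at hρ
    exact mul_left_cancel₀ (mul_ne_zero two_ne_zero hτ.1.ne') (by linear_combination -hρ)
  exact Prod.ext h₁ h₂

end

/-- Absence of spurious critical points for the two-annulus least squares objective:
for every `σ† ∈ (ℝ_{>0})²`, the only critical point of
`f(σ) = (1/2)‖Λ(σ) − Λ(σ†)‖²` in `(ℝ_{>0})²` is `σ†` itself. -/
theorem two_annulus_unique_critical_point (r : ℝ) (hr : r ∈ Set.Ioo (0 : ℝ) 1)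
    (lam : ℕ → ℝ → ℝ → ℝ)
    (hlam : ∀ (j : ℕ) (s1 s2 : ℝ), lam j s1 s2 =
      (1 + ((s1 - s2) / (s1 + s2)) * r ^ (2 * j)) /
        ((j : ℝ) * s1 * (1 - ((s1 - s2) / (s1 + s2)) * r ^ (2 * j))))
    (σd : ℝ × ℝ) (hσd : 0 < σd.1 ∧ 0 < σd.2)
    (f : ℝ × ℝ → ℝ)
    (hf : ∀ σ : ℝ × ℝ, f σ = (1 / 2) *
      ((lam 1 σ.1 σ.2 - lam 1 σd.1 σd.2) ^ 2 + (lam 2 σ.1 σ.2 - lam 2 σd.1 σd.2) ^ 2)) :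
    {σ : ℝ × ℝ | (0 < σ.1 ∧ 0 < σ.2) ∧ fderiv ℝ f σ = 0} = {σd} := by
  obtain ⟨hr₀, hr₁⟩ := hr
  have hq : ∀ j : ℕ, |r ^ (2 * j)| ≤ 1 := fun j => by
    rw [abs_of_pos (by positivity)]; exact pow_le_one₀ hr₀.le hr₁.le
  have hq₁₂ : r ^ (2 * 1) ≠ r ^ (2 * 2) := (pow_right_strictAnti₀ hr₀ hr₁ (by norm_num)).ne'
  have hlam' (j : ℕ) (σ : ℝ × ℝ) : lam j σ.1 σ.2 = twoAnnulusEig (r ^ (2 * j)) σ / j := by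
    rw [hlam, twoAnnulusEig, contrast, div_div]
    congr 1
    ring
  ext σ
  refine ⟨fun ⟨hσ, hcrit⟩ => ?_, ?_⟩
  · have hD (j : ℕ) := (hasFDerivAt_twoAnnulusEig (q := r ^ (2 * j)) hσ.1.ne'
      (add_pos hσ.1 hσ.2).ne'
      (by linarith [(abs_lt.1 (abs_contrast_mul_lt_one hσ (hq j))).2])).div_const j
    have hind := (LinearIndependent.pair_smul_smul_iff (by norm_num : IsUnit ((1 : ℕ) : ℝ)⁻¹)
      (by norm_num : IsUnit ((2 : ℕ) : ℝ)⁻¹)).2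
      (linearIndependent_twoAnnulusEigDeriv hσ (hq 1) (hq 2) hq₁₂)
    simp only [funext hf, hlam'] at hcrit
    obtain ⟨e₁, e₂⟩ := eq_of_fderiv_half_sum_sq_eq_zero (hD 1) (hD 2) hind hcrit
    exact injOn_twoAnnulusEig_pair (hq 1) (hq 2) hq₁₂ hσ hσd
      (congrArg₂ Prod.mk ((div_left_inj' (by norm_num)).1 e₁) ((div_left_inj' (by norm_num)).1 e₂))
  · rintro rfl
    refine ⟨hσd, IsLocalMin.fderiv_eq_zero (Eventually.of_forall fun τ => ?_)⟩
    have hmin : f σ = 0 := by simp [hf]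
    rw [hmin, hf]
    positivity
end

section
/- Let n ≥ 1, let 0 = r_n < r_{n−1} < ... < r_1 < r_0 = 1, and consider the forward map Λ : (ℝ_{>0})^n → ℝ^n of the radial Calderón problem with m = n measurements. At the constant conductivity σ = (1, ..., 1), the Jacobian entries are ∂_i λ_j(σ) = −(1/j)(r_{i−1}^{2j} − r_i^{2j}), and the Jacobian determinant satisfies (−1)^{n(n+1)/2} det Λ'(σ) > 0; in particular Λ'(1) is invertible. -/
/-!
At `σ = 1` every reflection coefficient `ρ_i` vanishes, hence so does every `C_{i,j}`, and the
recurrence linearises to `∂C_i = r_i^{2j} ∂ρ_i + ∂C_{i+1}` with `∂ρ_i = (∂σ_{i-1} - ∂σ_i) / 2`.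
Summing by parts, with `r_0 = 1` and `r_n = 0`, yields the entries of the Jacobian.

The Jacobian is `diag(-1/j)` times the matrix `(R_i^j - R_{i+1}^j)` with `R_i = r_i^2`.
Adding to each column all the columns to its right telescopes the latter into `(R_i^j)`, a
Vandermonde matrix with columns scaled by `R_i`. Since the `R_i` decrease strictly, the Vandermonde
determinant has sign `(-1)^{n(n-1)/2}`, and the diagonal factor contributes `(-1)^n`.
-/

open Finset

section

variable {𝕜 E : Type*} [NontriviallyNormedField 𝕜] [NormedAddCommGroup E] [NormedSpace 𝕜 E]
  {u v : E → 𝕜} {u' v' : E →L[𝕜] 𝕜} {x : E}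

theorem HasFDerivAt.div (hu : HasFDerivAt u u' x) (hv : HasFDerivAt v v' x) (hx : v x ≠ 0) :
    HasFDerivAt (fun y => u y / v y) ((v x)⁻¹ • u' - (u x / v x ^ 2) • v') x := by
  have hinv : HasFDerivAt (fun y => (v y)⁻¹) (-(v x ^ 2)⁻¹ • v') x :=
    (hasDerivAt_inv hx).comp_hasFDerivAt x hv
  simpa only [div_eq_mul_inv] using (hu.fun_mul hinv).congr_fderiv (by module)

end

namespace Matrix

theorem det_of_pow_sub_pow_succ {R : Type*} [CommRing R] {n : ℕ} (x : ℕ → R) (hx : x n = 0) :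
    (Matrix.of fun j i : Fin n => x i ^ (j.1 + 1) - x (i + 1) ^ (j.1 + 1)).det =
      (∏ i : Fin n, x i) * (vandermonde fun i : Fin n => x i).det := by
  set T : Matrix (Fin n) (Fin n) R := Matrix.of fun k i => if i ≤ k then 1 else 0
  have hT : T.det = 1 := by
    rw [det_of_isLowerTriangular T fun k i hki => if_neg (not_le.mpr hki)]
    simp [T]
  have hmul : (Matrix.of fun j i : Fin n => x i ^ (j.1 + 1) - x (i + 1) ^ (j.1 + 1)) * T =
      (diagonal (fun i : Fin n => x i) * vandermonde fun i : Fin n => x i)ᵀ := by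
    ext j i
    rw [transpose_apply, diagonal_mul, vandermonde_apply, mul_apply]
    simp only [of_apply, T, mul_ite, mul_one, mul_zero, Fin.le_def]
    rw [Fin.sum_univ_eq_sum_range
        (fun k => if i.1 ≤ k then x k ^ (j.1 + 1) - x (k + 1) ^ (j.1 + 1) else 0),
      ← sum_filter, range_eq_Ico, Ico_filter_le, max_eq_right (Nat.zero_le _)]
    simp_rw [← neg_sub (x (_ + 1) ^ _), sum_neg_distrib]
    rw [sum_Ico_sub (fun k => x k ^ (j.1 + 1)) i.2.le, hx, zero_pow (Nat.succ_ne_zero _), pow_succ']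
    ring
  rw [← det_diagonal, ← det_mul, ← det_transpose (_ * _), ← hmul, det_mul, hT, mul_one]

theorem neg_one_pow_mul_det_vandermonde_pos {n : ℕ} {v : Fin n → ℝ} (hv : StrictAnti v) :
    0 < (-1) ^ (n * (n - 1) / 2) * (vandermonde v).det := by
  have hcard : ∑ i : Fin n, #(Ioi i) = n * (n - 1) / 2 := by
    simp only [Fin.card_Ioi]
    rw [Fin.sum_univ_eq_sum_range (fun i => n - 1 - i), sum_range_reflect (fun i => i) n,
      sum_range_id]
  have hprod : (vandermonde v).det =
      (-1) ^ (n * (n - 1) / 2) * ∏ i, ∏ j ∈ Ioi i, (v i - v j) := by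
    rw [det_vandermonde, ← hcard, ← prod_pow_eq_pow_sum, ← prod_mul_distrib]
    exact prod_congr rfl fun i _ => by rw [← prod_neg]; simp
  rw [hprod, ← mul_assoc, ← pow_add, ← two_mul, pow_mul, neg_one_sq, one_pow, one_mul]
  exact prod_pos fun i _ => prod_pos fun j hj => sub_pos.mpr (hv (mem_Ioi.mp hj))

end Matrix

noncomputable section

namespace RadialCalderon

variable {n : ℕ}

def reflCoeff (σ : Fin n → ℝ) (k l : Fin n) : ℝ := (σ k - σ l) / (σ k + σ l)

theorem hasFDerivAt_reflCoeff_one (k l : Fin n) :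
    HasFDerivAt (fun σ => reflCoeff σ k l)
      ((2 : ℝ)⁻¹ • (.proj k - .proj l : (Fin n → ℝ) →L[ℝ] ℝ)) 1 := by
  have hk := hasFDerivAt_apply (𝕜 := ℝ) k (1 : Fin n → ℝ)
  have hl := hasFDerivAt_apply (𝕜 := ℝ) l (1 : Fin n → ℝ)
  refine ((hk.fun_sub hl).div (hk.fun_add hl) (by norm_num)).congr_fderiv ?_
  norm_num [one_add_one_eq_two]

theorem reflCoeff_one (k l : Fin n) : reflCoeff 1 k l = 0 := by
  simp [reflCoeff]

structure IsCoeffRecursion (a : ℕ → ℝ) (c : (Fin n → ℝ) → ℕ → ℝ) : Prop where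
  eq_zero : ∀ σ, c σ n = 0
  eq_step : ∀ σ i (hi : 1 ≤ i) (hi' : i ≤ n - 1), c σ i =
    (reflCoeff σ ⟨i - 1, by omega⟩ ⟨i, by omega⟩ * a i + c σ (i + 1)) /
      (1 + reflCoeff σ ⟨i - 1, by omega⟩ ⟨i, by omega⟩ * c σ (i + 1) * (a i)⁻¹)

/-- `coeffDeriv a i k` is `∂C_{i,j}/∂σ_k` at `σ = 1`, where `a l = r_l^{2j}`. -/
def coeffDeriv (a : ℕ → ℝ) (i k : ℕ) : ℝ :=
  ((if i ≤ k + 1 then a (k + 1) else 0) - (if i ≤ k then a k else 0)) / 2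

theorem coeffDeriv_succ_add (a : ℕ → ℝ) {i : ℕ} (hi : 1 ≤ i) (k : ℕ) :
    a i * (2⁻¹ * ((if i - 1 = k then 1 else 0) - if i = k then 1 else 0)) +
      coeffDeriv a (i + 1) k = coeffDeriv a i k := by
  unfold coeffDeriv
  obtain rfl | rfl | ⟨h, h'⟩ : i = k + 1 ∨ i = k ∨ (i ≠ k + 1 ∧ i ≠ k) := by omega
  all_goals split_ifs <;> first | omega | ring

theorem coeffDeriv_one (a : ℕ → ℝ) (k : ℕ) :
    coeffDeriv a 1 k = (a (k + 1) - if k = 0 then 0 else a k) / 2 := by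
  simp [coeffDeriv, Nat.one_le_iff_ne_zero]

theorem hasFDerivAt_coeff_one (a : ℕ → ℝ) (ha : a n = 0) {c : (Fin n → ℝ) → ℕ → ℝ}
    (hc : IsCoeffRecursion a c)
    {i : ℕ} (hi : 1 ≤ i) (hin : i ≤ n) :
    c 1 i = 0 ∧ ∃ L : (Fin n → ℝ) →L[ℝ] ℝ,
      HasFDerivAt (fun σ => c σ i) L 1 ∧ ∀ k : Fin n, L (Pi.single k 1) = coeffDeriv a i k := by
  induction hin using Nat.decreasingInduction with
  | self =>
    refine ⟨hc.eq_zero 1, 0, ?_, fun k => ?_⟩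
    · simpa only [hc.eq_zero] using hasFDerivAt_const (0 : ℝ) (1 : Fin n → ℝ)
    · have hk := k.2
      simp only [coeffDeriv, if_neg (show ¬ n ≤ k.1 by omega)]
      split_ifs with h
      · simp [show k.1 + 1 = n by omega, ha]
      · simp
  | of_succ i hin ih =>
    obtain ⟨hc0, L, hL, hLk⟩ := ih (by omega)
    set ρ := fun σ : Fin n → ℝ => reflCoeff σ ⟨i - 1, by omega⟩ ⟨i, hin⟩
    have hρ := hasFDerivAt_reflCoeff_one (⟨i - 1, by omega⟩ : Fin n) ⟨i, hin⟩
    have hρ0 : ρ 1 = 0 := reflCoeff_one _ _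
    have hfun : (fun σ => c σ i) =
        fun σ => (ρ σ * a i + c σ (i + 1)) / (1 + ρ σ * c σ (i + 1) * (a i)⁻¹) :=
      funext fun σ => hc.eq_step σ i hi (by omega)
    have hu := (hρ.mul_const (a i)).fun_add hL
    have hv := ((hρ.fun_mul hL).mul_const (a i)⁻¹).const_add 1
    refine ⟨by simp [congrFun hfun 1, hρ0, hc0], _, hfun ▸ (hu.div hv (by simp [hc0])), fun k => ?_⟩
    simpa [hc0, hLk, reflCoeff_one, Pi.single_apply, Fin.ext_iff] using coeffDeriv_succ_add a hi k

theorem hasFDerivAt_eigenvalue_one {c : (Fin n → ℝ) → ℝ} {L : (Fin n → ℝ) →L[ℝ] ℝ}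
    (hc0 : c 1 = 0) (hc : HasFDerivAt c L 1) {m : ℝ} (hm : m ≠ 0) (i₀ : Fin n) :
    HasFDerivAt (fun σ => (1 + c σ) / (m * σ i₀ * (1 - c σ)))
      ((2 / m) • L - m⁻¹ • .proj i₀) 1 := by
  have hv := ((hasFDerivAt_apply (𝕜 := ℝ) i₀ (1 : Fin n → ℝ)).const_mul m).fun_mul
    (hc.const_sub 1)
  refine ((hc.const_add 1).div hv (by simp [hc0, hm])).congr_fderiv ?_
  ext h
  simp only [Pi.one_apply, mul_one, hc0, sub_zero, add_zero, one_div, smul_neg, one_smul, smul_add,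
    sub_apply, smul_apply, smul_eq_mul, add_apply, neg_apply, ContinuousLinearMap.proj_apply]
  field_simp
  ring

theorem fderiv_eigenvalue_one_single (hn : 0 < n) (a : ℕ → ℝ) (ha0 : a 0 = 1) (ha : a n = 0)
    {c : (Fin n → ℝ) → ℕ → ℝ} (hc : IsCoeffRecursion a c)
    {m : ℝ} (hm : m ≠ 0) (k : Fin n) :
    fderiv ℝ (fun σ => (1 + c σ 1) / (m * σ ⟨0, hn⟩ * (1 - c σ 1))) 1 (Pi.single k 1) =
      -(1 / m) * (a k - a (k + 1)) := by
  obtain ⟨hc0, L, hL, hLk⟩ := hasFDerivAt_coeff_one a ha hc le_rfl hn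
  rw [(hasFDerivAt_eigenvalue_one hc0 hL hm ⟨0, hn⟩).fderiv]
  have hproj : (ContinuousLinearMap.proj ⟨0, hn⟩ : (Fin n → ℝ) →L[ℝ] ℝ) (Pi.single k 1) =
      if k.1 = 0 then 1 else 0 := by
    simp [Pi.single_apply, Fin.ext_iff, eq_comm]
  rw [sub_apply, smul_apply, smul_apply, hLk, hproj, coeffDeriv_one, smul_eq_mul, smul_eq_mul]
  split_ifs with h
  · rw [h, ha0]
    ring
  · ring

open Matrix in
theorem neg_one_pow_mul_det_jacobian_pos (r : ℕ → ℝ) (hrn : r n = 0)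
    (hr : ∀ i < n, r (i + 1) < r i) :
    0 < (-1) ^ (n * (n + 1) / 2) * (Matrix.of fun j i : Fin n =>
      -(1 / (j.1 + 1 : ℝ)) * (r i ^ (2 * (j.1 + 1)) - r (i + 1) ^ (2 * (j.1 + 1)))).det := by
  have hanti : StrictAntiOn r (Set.Iic n) := strictAntiOn_Iic_of_succ_lt fun m hm => hr m hm
  have hpos : ∀ i < n, 0 < r i := fun i hi =>
    hrn ▸ hanti (Set.mem_Iic.mpr hi.le) (Set.mem_Iic.mpr le_rfl) hi
  have hx : StrictAnti fun i : Fin n => r i ^ 2 := fun i k hik =>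
    pow_lt_pow_left₀ (hanti (Set.mem_Iic.mpr i.2.le) (Set.mem_Iic.mpr k.2.le) hik)
      (hpos k k.2).le two_ne_zero
  have hM : (Matrix.of fun j i : Fin n =>
      -(1 / (j.1 + 1 : ℝ)) * (r i ^ (2 * (j.1 + 1)) - r (i + 1) ^ (2 * (j.1 + 1)))) =
      diagonal (fun j : Fin n => -(1 / (j.1 + 1 : ℝ))) *
        Matrix.of fun j i : Fin n => (r i ^ 2) ^ (j.1 + 1) - (r (i + 1) ^ 2) ^ (j.1 + 1) := by
    ext j i
    simp [diagonal_mul, pow_mul]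
  have htri : n * (n + 1) / 2 = n * (n - 1) / 2 + n := by
    rw [← Nat.triangle_succ, Nat.add_sub_cancel, mul_comm]
  have hsign : (-1 : ℝ) ^ (n * (n + 1) / 2) * ∏ j : Fin n, -(1 / (j.1 + 1 : ℝ)) =
      (-1) ^ (n * (n - 1) / 2) * ∏ j : Fin n, 1 / (j.1 + 1 : ℝ) := by
    rw [prod_neg, card_univ, Fintype.card_fin, htri, pow_add, mul_assoc, ← mul_assoc ((-1) ^ n),
      ← pow_add, Even.neg_one_pow ⟨n, rfl⟩, one_mul]
  rw [hM, det_mul, det_diagonal, det_of_pow_sub_pow_succ (fun i => r i ^ 2) (by simp [hrn]),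
    ← mul_assoc, hsign]
  have hprod_inv : 0 < ∏ j : Fin n, 1 / (j.1 + 1 : ℝ) := prod_pos fun j _ => by positivity
  have hprod_sq : 0 < ∏ i : Fin n, r i ^ 2 := prod_pos fun i _ => pow_pos (hpos i i.2) 2
  exact (mul_pos (mul_pos hprod_inv hprod_sq) (neg_one_pow_mul_det_vandermonde_pos hx)).trans_eq
    (by ring)

end RadialCalderon

end

open RadialCalderon in
/-- At the constant conductivity `σ = 1`, the Jacobian of the forward map of the radial
Calderón problem with `m = n` measurements has entries
`∂_i λ_j(1) = −(1/j)(r_{i−1}^{2j} − r_i^{2j})` and its determinant satisfies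
`(−1)^{n(n+1)/2} det Λ'(1) > 0`; in particular `Λ'(1)` is invertible. -/
theorem jacobian_at_constant_conductivity (n : ℕ) (hn : 1 ≤ n)
    (r : ℕ → ℝ) (hr0 : r 0 = 1) (hrn : r n = 0)
    (hrmono : ∀ i, i < n → r (i + 1) < r i)
    (C : (Fin n → ℝ) → ℕ → ℕ → ℝ)
    (hCn : ∀ (σ : Fin n → ℝ) (j : ℕ), C σ j n = 0)
    (hCrec : ∀ (σ : Fin n → ℝ) (j : ℕ), 1 ≤ j → ∀ i (hi : 1 ≤ i) (hi' : i ≤ n - 1),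
      C σ j i =
        ((σ ⟨i - 1, by omega⟩ - σ ⟨i, by omega⟩) / (σ ⟨i - 1, by omega⟩ + σ ⟨i, by omega⟩)
            * (r i) ^ (2 * j) + C σ j (i + 1)) /
          (1 + (σ ⟨i - 1, by omega⟩ - σ ⟨i, by omega⟩) /
              (σ ⟨i - 1, by omega⟩ + σ ⟨i, by omega⟩) * C σ j (i + 1) *
            ((r i) ^ (2 * j))⁻¹))
    (lam : (Fin n → ℝ) → ℕ → ℝ)
    (hlam : ∀ (σ : Fin n → ℝ) (j : ℕ), 1 ≤ j →
      lam σ j = (1 + C σ j 1) / ((j : ℝ) * σ ⟨0, by omega⟩ * (1 - C σ j 1))) :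
    (∀ j i : Fin n,
      fderiv ℝ (fun σ => lam σ (j.1 + 1)) (fun _ => 1) (Pi.single i 1) =
        -(1 / (j.1 + 1 : ℝ)) * ((r i.1) ^ (2 * (j.1 + 1)) - (r (i.1 + 1)) ^ (2 * (j.1 + 1)))) ∧
    0 < (-1 : ℝ) ^ (n * (n + 1) / 2) *
      (Matrix.of fun j i : Fin n =>
        fderiv ℝ (fun σ => lam σ (j.1 + 1)) (fun _ => 1) (Pi.single i 1)).det := by
  have hentry : ∀ j i : Fin n,
      fderiv ℝ (fun σ => lam σ (j.1 + 1)) (fun _ => 1) (Pi.single i 1) =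
        -(1 / (j.1 + 1 : ℝ)) * ((r i.1) ^ (2 * (j.1 + 1)) - (r (i.1 + 1)) ^ (2 * (j.1 + 1))) := by
    intro j i
    rw [show (fun σ => lam σ (j.1 + 1)) = _ from funext fun σ => hlam σ _ (by omega)]
    exact_mod_cast fderiv_eigenvalue_one_single hn (fun i => r i ^ (2 * (j.1 + 1))) (by simp [hr0])
      (by simp [hrn]) ⟨fun σ => hCn σ _, fun σ i hi hi' => hCrec σ _ (by omega) i hi hi'⟩
      (by positivity) i
  exact ⟨hentry, by simpa only [hentry] using neg_one_pow_mul_det_jacobian_pos r hrn hrmono⟩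
end

section
/- Fix r ∈ (0,1) and a positive integer j, and let λ_j(σ_1, σ_2) = (1 + ρ r^{2j})/(j σ_1 (1 − ρ r^{2j})) with ρ = (σ_1 − σ_2)/(σ_1 + σ_2). Then the function λ_j : (ℝ_{>0})^2 → ℝ is convex. -/
/-!
Writing `t = r^(2j)`, the identities `1 ± ρ t = ((1 ± t) σ₁ + (1 ∓ t) σ₂) / (σ₁ + σ₂)` turn
`j λ_j` into `((1 + t) σ₁ + (1 - t) σ₂) / (σ₁ ((1 - t) σ₁ + (1 + t) σ₂))`, whose partial fraction
decomposition
`(1 - t)/(1 + t) · σ₁⁻¹ + 4t/(1 + t) · ((1 - t) σ₁ + (1 + t) σ₂)⁻¹`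
is a nonnegative combination of reciprocals of positive linear forms, each of which is convex.
-/

open Set

lemma convexOn_inv_comp_affineMap {E : Type*} [AddCommGroup E] [Module ℝ E] {s : Set E}
    (hs : Convex ℝ s) (f : E →ᵃ[ℝ] ℝ) (hf : ∀ x ∈ s, 0 < f x) :
    ConvexOn ℝ s fun x => (f x)⁻¹ := by
  have hinv : ConvexOn ℝ (Ioi 0) fun x : ℝ => x⁻¹ :=
    (convexOn_zpow (-1)).congr fun x _ => zpow_neg_one x
  exact (hinv.comp_affineMap f).subset hf hs

lemma convex_positiveQuadrant : Convex ℝ {σ : ℝ × ℝ | 0 < σ.1 ∧ 0 < σ.2} :=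
  (convex_Ioi 0).prod (convex_Ioi 0)

lemma convexOn_inv_linearForm {p q : ℝ} (hp : 0 ≤ p) (hq : 0 < q) :
    ConvexOn ℝ {σ : ℝ × ℝ | 0 < σ.1 ∧ 0 < σ.2} fun σ => (p * σ.1 + q * σ.2)⁻¹ :=
  convexOn_inv_comp_affineMap convex_positiveQuadrant
    (p • LinearMap.fst ℝ ℝ ℝ + q • LinearMap.snd ℝ ℝ ℝ).toAffineMap
    fun σ hσ => by
      simpa using add_pos_of_nonneg_of_pos (mul_nonneg hp hσ.1.le) (mul_pos hq hσ.2)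

lemma convexOn_two_annulus_ratio {t : ℝ} (ht₀ : 0 ≤ t) (ht₁ : t ≤ 1) :
    ConvexOn ℝ {σ : ℝ × ℝ | 0 < σ.1 ∧ 0 < σ.2} fun σ =>
      ((1 + t) * σ.1 + (1 - t) * σ.2) / (σ.1 * ((1 - t) * σ.1 + (1 + t) * σ.2)) := by
  have ha : 0 < 1 + t := by linarith
  have hb : 0 ≤ 1 - t := by linarith
  have hinvFst : ConvexOn ℝ {σ : ℝ × ℝ | 0 < σ.1 ∧ 0 < σ.2} fun σ => σ.1⁻¹ :=
    convexOn_inv_comp_affineMap convex_positiveQuadrant (LinearMap.fst ℝ ℝ ℝ).toAffineMap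
      fun σ hσ => hσ.1
  refine ((hinvFst.smul (c := (1 - t) / (1 + t)) (by positivity)).add
    ((convexOn_inv_linearForm hb ha).smul (c := 4 * t / (1 + t)) (by positivity))).congr ?_
  rintro σ ⟨hσ₁, hσ₂⟩
  have hden : 0 < (1 - t) * σ.1 + (1 + t) * σ.2 := by positivity
  simp only [Pi.add_apply, smul_eq_mul]
  field_simp
  ring

lemma two_annulus_eigenvalue_eq {s₁ s₂ : ℝ} (hs₁ : 0 < s₁) (hs₂ : 0 < s₂) (c t : ℝ) :
    (1 + (s₁ - s₂) / (s₁ + s₂) * t) / (c * s₁ * (1 - (s₁ - s₂) / (s₁ + s₂) * t)) =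
      c⁻¹ * (((1 + t) * s₁ + (1 - t) * s₂) / (s₁ * ((1 - t) * s₁ + (1 + t) * s₂))) := by
  have hs : s₁ + s₂ ≠ 0 := by positivity
  have hplus : 1 + (s₁ - s₂) / (s₁ + s₂) * t = ((1 + t) * s₁ + (1 - t) * s₂) / (s₁ + s₂) := by
    field_simp; ring
  have hminus : 1 - (s₁ - s₂) / (s₁ + s₂) * t = ((1 - t) * s₁ + (1 + t) * s₂) / (s₁ + s₂) := by
    field_simp; ring
  rw [hplus, hminus, mul_div_assoc', div_div_div_cancel_right₀ hs]
  simp only [div_eq_mul_inv, mul_inv]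
  ring

theorem two_annulus_eigenvalue_convex_general (r : ℝ) (hr : r ∈ Set.Ioo (0 : ℝ) 1)
    (j : ℕ)
    (lam : ℝ → ℝ → ℝ)
    (hlam : ∀ s1 s2 : ℝ, lam s1 s2 =
      (1 + ((s1 - s2) / (s1 + s2)) * r ^ (2 * j)) /
        ((j : ℝ) * s1 * (1 - ((s1 - s2) / (s1 + s2)) * r ^ (2 * j)))) :
    ConvexOn ℝ {σ : ℝ × ℝ | 0 < σ.1 ∧ 0 < σ.2} (fun σ => lam σ.1 σ.2) := by
  have ht₀ : 0 ≤ r ^ (2 * j) := pow_nonneg hr.1.le _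
  have ht₁ : r ^ (2 * j) ≤ 1 := pow_le_one₀ hr.1.le hr.2.le
  refine ((convexOn_two_annulus_ratio ht₀ ht₁).smul (c := (j : ℝ)⁻¹) (by positivity)).congr ?_
  rintro σ ⟨hσ₁, hσ₂⟩
  simp only [hlam, two_annulus_eigenvalue_eq hσ₁ hσ₂, smul_eq_mul]

/-- Convexity of the two-annulus Neumann-to-Dirichlet eigenvalue
`λ_j(σ₁,σ₂) = (1 + ρ r^(2j))/(j σ₁ (1 − ρ r^(2j)))`, `ρ = (σ₁−σ₂)/(σ₁+σ₂)`,
on the positive quadrant. -/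
theorem two_annulus_eigenvalue_convex (r : ℝ) (hr : r ∈ Set.Ioo (0 : ℝ) 1)
    (j : ℕ) (hj : 1 ≤ j)
    (lam : ℝ → ℝ → ℝ)
    (hlam : ∀ s1 s2 : ℝ, lam s1 s2 =
      (1 + ((s1 - s2) / (s1 + s2)) * r ^ (2 * j)) /
        ((j : ℝ) * s1 * (1 - ((s1 - s2) / (s1 + s2)) * r ^ (2 * j)))) :
    ConvexOn ℝ {σ : ℝ × ℝ | 0 < σ.1 ∧ 0 < σ.2} (fun σ => lam σ.1 σ.2) :=
  two_annulus_eigenvalue_convex_general r hr j lam hlam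
end
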